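/- Let H be a group with a central element z of order exactly 2 such that every commutator ⁅g,h⁆ = g h g⁻¹ h⁻¹ (for g, h ∈ H) lies in {1, z}, and assume the center Z(H) has finite index in H, so that [H : Z(H)] = n² for a positive integer n. Let χ : Z(H) → ℂˣ be a character with χ(z) = −1, and let π(χ) be the (unique up to isomorphism) finite-dimensional irreducible complex representation of H whose restriction to Z(H) is a multiple of χ. Then dim π(χ) = n, and the induced representation Ind_{Z(H)}^{H} χ is isomorphic to the direct sum of n copies of π(χ). -/

import Mathlib

/-- A finite-dimensional complex representation of a group `H`. -/
structure FinDimRep (H : Type) [Group H] where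
  carrier : Type
  [acg : AddCommGroup carrier]
  [mod : Module ℂ carrier]
  [fd : FiniteDimensional ℂ carrier]
  ρ : Representation ℂ H carrier

attribute [instance] FinDimRep.acg FinDimRep.mod FinDimRep.fd

variable {H : Type} [Group H]

/-- Irreducibility: the space is nonzero and has no proper nonzero invariant subspace. -/
def FinDimRep.IsIrreducible (π : FinDimRep H) : Prop :=
  (⊤ : Submodule ℂ π.carrier) ≠ ⊥ ∧
  ∀ U : Submodule ℂ π.carrier, (∀ g : H, ∀ x ∈ U, π.ρ g x ∈ U) → U = ⊥ ∨ U = ⊤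

/-- The restriction of `π` to the center is a multiple of the character `χ`. -/
def FinDimRep.RestrictsTo (π : FinDimRep H) (χ : Subgroup.center H →* ℂˣ) : Prop :=
  ∀ s : Subgroup.center H,
    π.ρ (s : H) = (χ s : ℂ) • (1 : π.carrier →ₗ[ℂ] π.carrier)

/-- Isomorphism of two representations of `H` on complex vector spaces. -/
def RepIso {W W' : Type} [AddCommGroup W] [Module ℂ W] [AddCommGroup W'] [Module ℂ W']
    (ρ : Representation ℂ H W) (ρ' : Representation ℂ H W') : Prop :=
  ∃ e : W ≃ₗ[ℂ] W', ∀ (g : H) (x : W), e (ρ g x) = ρ' g (e x)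

/-- The space of the representation of `H` induced from the character `χ` of the
center: functions `f : H → ℂ` with `f(sh) = χ(s)f(h)` for `s ∈ Z(H)`. -/
noncomputable def indSpace (H : Type) [Group H] (χ : Subgroup.center H →* ℂˣ) :
    Submodule ℂ (H → ℂ) where
  carrier := {f | ∀ (s : Subgroup.center H) (h : H), f ((s : H) * h) = (χ s : ℂ) * f h}
  add_mem' := by
    intro a b ha hb s h
    simp only [Pi.add_apply, ha s h, hb s h, mul_add]
  zero_mem' := by
    intro s h
    simp
  smul_mem' := by
    intro t f hf s h
    simp only [Pi.smul_apply, hf s h, smul_eq_mul]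
    ring

/-- The induced representation `Ind_{Z(H)}^{H} χ`, by right translation. -/
noncomputable def indRep (H : Type) [Group H] (χ : Subgroup.center H →* ℂˣ) :
    Representation ℂ H (indSpace H χ) where
  toFun g :=
    { toFun := fun f => ⟨fun h => (f : H → ℂ) (h * g), by
        intro s h
        simpa [mul_assoc] using f.2 s (h * g)⟩
      map_add' := by
        intro a b
        apply Subtype.ext
        funext h
        rfl
      map_smul' := by
        intro t a
        apply Subtype.ext
        funext h
        rfl }
  map_one' := by
    apply LinearMap.ext
    intro f
    apply Subtype.ext
    funext h
    simp
  map_mul' := by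
    intro g g'
    apply LinearMap.ext
    intro f
    apply Subtype.ext
    funext h
    simp [mul_assoc]

/-- The direct sum of `n` copies of a representation. -/
noncomputable def copiesRep (H : Type) [Group H] (n : ℕ) {W : Type} [AddCommGroup W] [Module ℂ W]
    (ρ : Representation ℂ H W) : Representation ℂ H (Fin n → W) where
  toFun g :=
    { toFun := fun v i => ρ g (v i)
      map_add' := by
        intro a b
        funext i
        simp
      map_smul' := by
        intro t a
        funext i
        simp }
  map_one' := by
    apply LinearMap.ext
    intro v
    funext i
    simp
  map_mul' := by
    intro g g'
    apply LinearMap.ext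
    intro v
    funext i
    simp

open scoped commutatorElement

/-!
The trace coefficients `S ↦ (h ↦ tr (π h ∘ S))` map `End π` into the induced space and turn
left multiplication by `π g` into right translation by `g`. If `g ∉ Z(H)`, some `h` has
`h g h⁻¹ = z g`, so `χ z = -1` forces `tr (π g) = 0`; hence `f ↦ ∑_{c ∈ H/Z} f (c⁻¹) • π c`
is a right inverse of the trace-coefficient map up to the factor `dim π`. Schur's lemma,
applied to the averages `∑_{c ∈ H/Z} π c ∘ T ∘ π c⁻¹`, makes it a left inverse up to
`[H : Z(H)] / dim π`. So `(dim π)² = [H : Z(H)]`, and `Ind χ ≅ End π ≅ π ^ dim π`.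
-/

open LinearMap

section RepIso

variable {W W' W'' : Type} [AddCommGroup W] [Module ℂ W] [AddCommGroup W'] [Module ℂ W']
  [AddCommGroup W''] [Module ℂ W''] {ρ : Representation ℂ H W} {ρ' : Representation ℂ H W'}
  {ρ'' : Representation ℂ H W''}

theorem RepIso.symm (h : RepIso ρ ρ') : RepIso ρ' ρ := by
  obtain ⟨e, he⟩ := h
  exact ⟨e.symm, fun g x => by rw [e.symm_apply_eq, he, e.apply_symm_apply]⟩

theorem RepIso.trans (h : RepIso ρ ρ') (h' : RepIso ρ' ρ'') : RepIso ρ ρ'' := by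
  obtain ⟨e, he⟩ := h
  obtain ⟨e', he'⟩ := h'
  exact ⟨e.trans e', fun g x => by simp [he, he']⟩

end RepIso

theorem Module.End.linearMap_ext_smulRight {R V W : Type*} [CommRing R] [AddCommGroup V]
    [Module R V] [Module.Free R V] [Module.Finite R V] [AddCommGroup W] [Module R W]
    {L₁ L₂ : Module.End R V →ₗ[R] W}
    (h : ∀ (l : Module.Dual R V) (v : V), L₁ (l.smulRight v) = L₂ (l.smulRight v)) :
    L₁ = L₂ := by
  let e := dualTensorHomEquivOfBasis (N := V) (Module.Free.chooseBasis R V)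
  have he : L₁ ∘ₗ e.toLinearMap = L₂ ∘ₗ e.toLinearMap :=
    TensorProduct.ext' fun l v => by
      simpa [e, show dualTensorHom R V V (l ⊗ₜ v) = l.smulRight v from rfl] using h l v
  ext S
  simpa using LinearMap.congr_fun he (e.symm S)

theorem QuotientGroup.mul_out_mem_iff {G : Type*} [Group G] {K : Subgroup G} (g : G)
    (c : G ⧸ K) : g * c.out ∈ K ↔ c = ((g⁻¹ : G) : G ⧸ K) := by
  conv_rhs => rw [← QuotientGroup.out_eq' c]
  rw [eq_comm, QuotientGroup.eq, inv_inv]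

namespace FinDimRep

variable {π : FinDimRep H} {χ : Subgroup.center H →* ℂˣ}

theorem IsIrreducible.nontrivial (hirr : π.IsIrreducible) :
    Nontrivial π.carrier := by
  rcases subsingleton_or_nontrivial π.carrier with h | h
  · exact absurd (Subsingleton.elim _ _) hirr.1
  · exact h

theorem IsIrreducible.natCast_finrank_ne_zero (hirr : π.IsIrreducible) :
    (Module.finrank ℂ π.carrier : ℂ) ≠ 0 := by
  have := hirr.nontrivial
  simp [Module.finrank_pos.ne']

theorem IsIrreducible.exists_eq_smul_one (hirr : π.IsIrreducible)
    (C : Module.End ℂ π.carrier) (hC : ∀ g, Commute (π.ρ g) C) : ∃ μ : ℂ, C = μ • 1 := by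
  have := hirr.nontrivial
  obtain ⟨μ, hμ⟩ := Module.End.exists_eigenvalue C
  have hinv : ∀ g, ∀ x ∈ C.eigenspace μ, π.ρ g x ∈ C.eigenspace μ := by
    intro g x hx
    rw [Module.End.mem_eigenspace_iff] at hx ⊢
    rw [← Module.End.mul_apply, ← (hC g).eq, Module.End.mul_apply, hx, map_smul]
  refine ⟨μ, LinearMap.ext fun x => ?_⟩
  have hx : x ∈ C.eigenspace μ := ((hirr.2 _ hinv).resolve_left hμ) ▸ Submodule.mem_top
  simpa using Module.End.mem_eigenspace_iff.mp hx

theorem trace_conj (T : Module.End ℂ π.carrier) (g : H) :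
    trace ℂ _ (π.ρ g * T * π.ρ g⁻¹) = trace ℂ _ T := by
  rw [trace_mul_comm, ← mul_assoc, ← map_mul, inv_mul_cancel, map_one, one_mul]

theorem commute_of_conj_eq {g : H} {C : Module.End ℂ π.carrier}
    (h : π.ρ g * C * π.ρ g⁻¹ = C) : Commute (π.ρ g) C :=
  calc π.ρ g * C = π.ρ g * C * π.ρ g⁻¹ * π.ρ g := by
        rw [mul_assoc _ (π.ρ g⁻¹), ← map_mul, inv_mul_cancel, map_one, mul_one]
    _ = C * π.ρ g := by rw [h]

theorem RestrictsTo.conj_center (hres : π.RestrictsTo χ) (s : Subgroup.center H)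
    (T : Module.End ℂ π.carrier) : π.ρ s * T * π.ρ (s : H)⁻¹ = T := by
  rw [← Subgroup.coe_inv, hres, hres, smul_mul_assoc, one_mul, mul_smul_comm, mul_one,
    smul_smul, ← Units.val_mul, ← map_mul, inv_mul_cancel, map_one, Units.val_one, one_smul]

theorem RestrictsTo.conj_eq_of_mk_eq (hres : π.RestrictsTo χ) (T : Module.End ℂ π.carrier)
    {a b : H} (hab : (a : H ⧸ Subgroup.center H) = b) :
    π.ρ a * T * π.ρ a⁻¹ = π.ρ b * T * π.ρ b⁻¹ := by
  obtain ⟨s, rfl⟩ : ∃ s : Subgroup.center H, b = a * s :=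
    ⟨⟨a⁻¹ * b, QuotientGroup.eq.mp hab⟩, by simp⟩
  calc π.ρ a * T * π.ρ a⁻¹ = π.ρ a * (π.ρ s * T * π.ρ (s : H)⁻¹) * π.ρ a⁻¹ := by
        rw [hres.conj_center]
    _ = π.ρ (a * s) * T * π.ρ (a * s)⁻¹ := by simp only [mul_inv_rev, map_mul, mul_assoc]

theorem RestrictsTo.trace_ρ_center (hres : π.RestrictsTo χ) (s : Subgroup.center H) :
    trace ℂ _ (π.ρ s) = χ s * Module.finrank ℂ π.carrier := by
  rw [hres, map_smul, trace_one, smul_eq_mul]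

theorem RestrictsTo.trace_ρ_eq_zero_of_notMem_center (hres : π.RestrictsTo χ) {z : H}
    (hz : z ∈ Subgroup.center H) (hχ : χ ⟨z, hz⟩ = -1)
    (hcomm : ∀ g h : H, ⁅g, h⁆ ∈ ({1, z} : Set H)) {g : H} (hg : g ∉ Subgroup.center H) :
    trace ℂ _ (π.ρ g) = 0 := by
  obtain ⟨h, hh⟩ : ∃ h, ⁅h, g⁆ ≠ 1 := by
    by_contra! hc
    exact hg (Subgroup.mem_center_iff.mpr fun h => commutatorElement_eq_one_iff_mul_comm.mp (hc h))
  have hconj : h * g * h⁻¹ = z * g := by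
    rw [← (hcomm h g).resolve_left hh]
    group
  have : trace ℂ _ (π.ρ g) = -trace ℂ _ (π.ρ g) :=
    calc trace ℂ _ (π.ρ g) = trace ℂ _ (π.ρ h * π.ρ g * π.ρ h⁻¹) := (trace_conj _ h).symm
      _ = trace ℂ _ (π.ρ ((⟨z, hz⟩ : Subgroup.center H) * g)) := by
        rw [← map_mul, ← map_mul, hconj]
      _ = -trace ℂ _ (π.ρ g) := by rw [map_mul, hres, hχ]; simp
  linear_combination this / 2

theorem IsIrreducible.sum_conj_out [Fintype (H ⧸ Subgroup.center H)] (hirr : π.IsIrreducible)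
    (hres : π.RestrictsTo χ) (T : Module.End ℂ π.carrier) :
    ∑ c : H ⧸ Subgroup.center H, π.ρ c.out * T * π.ρ c.out⁻¹ =
      ((Fintype.card (H ⧸ Subgroup.center H) * trace ℂ _ T /
        Module.finrank ℂ π.carrier : ℂ)) • 1 := by
  set C := ∑ c : H ⧸ Subgroup.center H, π.ρ c.out * T * π.ρ c.out⁻¹
  have hconj : ∀ g, π.ρ g * C * π.ρ g⁻¹ = C := by
    intro g
    simp only [C, Finset.mul_sum, Finset.sum_mul]
    refine Fintype.sum_equiv (Equiv.mulLeft (g : H ⧸ Subgroup.center H)) _ _ fun c => ?_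
    have hmk : ((g * c.out : H) : H ⧸ Subgroup.center H) =
        ((g : H ⧸ Subgroup.center H) * c).out := by
      rw [QuotientGroup.out_eq', QuotientGroup.mk_mul, QuotientGroup.out_eq']
    rw [Equiv.coe_mulLeft, ← hres.conj_eq_of_mk_eq T hmk]
    simp only [mul_inv_rev, map_mul, mul_assoc]
  obtain ⟨μ, hμ⟩ := hirr.exists_eq_smul_one C fun g => commute_of_conj_eq (hconj g)
  have htrace : μ * Module.finrank ℂ π.carrier =
      Fintype.card (H ⧸ Subgroup.center H) * trace ℂ _ T := by
    rw [← smul_eq_mul, ← trace_one, ← map_smul, ← hμ, map_sum]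
    simp [trace_conj]
  rw [hμ, (eq_div_iff hirr.natCast_finrank_ne_zero).mpr htrace]

variable (π) in
noncomputable def toIndSpace (hres : π.RestrictsTo χ) :
    Module.End ℂ π.carrier →ₗ[ℂ] indSpace H χ :=
  (LinearMap.pi fun h => trace ℂ _ ∘ₗ LinearMap.mulLeft ℂ (π.ρ h)).codRestrict _
    fun S s h => by simp [hres s]

@[simp]
theorem toIndSpace_apply (hres : π.RestrictsTo χ) (S : Module.End ℂ π.carrier) (h : H) :
    (π.toIndSpace hres S : H → ℂ) h = trace ℂ _ (π.ρ h * S) :=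
  rfl

variable (π χ) in
noncomputable def ofIndSpace [Fintype (H ⧸ Subgroup.center H)] :
    indSpace H χ →ₗ[ℂ] Module.End ℂ π.carrier :=
  ∑ c : H ⧸ Subgroup.center H,
    (LinearMap.proj c.out⁻¹ ∘ₗ (indSpace H χ).subtype).smulRight (π.ρ c.out)

theorem ofIndSpace_apply [Fintype (H ⧸ Subgroup.center H)] (f : indSpace H χ) :
    π.ofIndSpace χ f = ∑ c : H ⧸ Subgroup.center H, (f : H → ℂ) c.out⁻¹ • π.ρ c.out := by
  simp [ofIndSpace]

theorem toIndSpace_mul (hres : π.RestrictsTo χ) (g : H) (S : Module.End ℂ π.carrier) :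
    π.toIndSpace hres (π.ρ g * S) = indRep H χ g (π.toIndSpace hres S) :=
  Subtype.ext <| funext fun h => by simp [indRep, mul_assoc]

theorem toIndSpace_ofIndSpace [Fintype (H ⧸ Subgroup.center H)] (hres : π.RestrictsTo χ)
    {z : H} (hz : z ∈ Subgroup.center H) (hχ : χ ⟨z, hz⟩ = -1)
    (hcomm : ∀ g h : H, ⁅g, h⁆ ∈ ({1, z} : Set H)) (f : indSpace H χ) :
    π.toIndSpace hres (π.ofIndSpace χ f) = (Module.finrank ℂ π.carrier : ℂ) • f := by
  refine Subtype.ext <| funext fun h => ?_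
  rw [toIndSpace_apply, ofIndSpace_apply, Finset.mul_sum, map_sum, Submodule.coe_smul,
    Pi.smul_apply, smul_eq_mul]
  simp only [mul_smul_comm, ← map_mul, map_smul, smul_eq_mul]
  rw [Fintype.sum_eq_single ((h⁻¹ : H) : H ⧸ Subgroup.center H)]
  · set g := ((h⁻¹ : H) : H ⧸ Subgroup.center H).out
    let s : Subgroup.center H := ⟨h * g, (QuotientGroup.mul_out_mem_iff h _).mpr rfl⟩
    have hg : g⁻¹ = (s⁻¹ : Subgroup.center H) * h := by simp [s]
    rw [hg, f.2, show h * g = s from rfl, hres.trace_ρ_center, map_inv, Units.val_inv_eq_inv_val]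
    simp [field]
  · intro c hc
    rw [hres.trace_ρ_eq_zero_of_notMem_center hz hχ hcomm, mul_zero]
    rwa [QuotientGroup.mul_out_mem_iff]

theorem IsIrreducible.finrank_smul_ofIndSpace_toIndSpace [Fintype (H ⧸ Subgroup.center H)]
    (hirr : π.IsIrreducible) (hres : π.RestrictsTo χ) (S : Module.End ℂ π.carrier) :
    (Module.finrank ℂ π.carrier : ℂ) • π.ofIndSpace χ (π.toIndSpace hres S) =
      (Fintype.card (H ⧸ Subgroup.center H) : ℂ) • S := by
  suffices (Module.finrank ℂ π.carrier : ℂ) • (π.ofIndSpace χ ∘ₗ π.toIndSpace hres) =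
      (Fintype.card (H ⧸ Subgroup.center H) : ℂ) • LinearMap.id from
    LinearMap.congr_fun this S
  refine Module.End.linearMap_ext_smulRight fun l v => LinearMap.ext fun u => ?_
  have hsum : π.ofIndSpace χ (π.toIndSpace hres (l.smulRight v)) u =
      (∑ c : H ⧸ Subgroup.center H, π.ρ c.out * l.smulRight u * π.ρ c.out⁻¹) v := by
    rw [ofIndSpace_apply, LinearMap.sum_apply, LinearMap.sum_apply]
    refine Finset.sum_congr rfl fun c _ => ?_
    have hcomp : π.ρ c.out⁻¹ * l.smulRight v = l.smulRight (π.ρ c.out⁻¹ v) := by ext; simp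
    rw [LinearMap.smul_apply, toIndSpace_apply, hcomp, trace_smulRight]
    simp
  simp [hsum, hirr.sum_conj_out hres, trace_smulRight, smul_smul,
    mul_div_cancel₀ _ hirr.natCast_finrank_ne_zero]

theorem IsIrreducible.finrank_sq_eq_card [Fintype (H ⧸ Subgroup.center H)]
    (hirr : π.IsIrreducible) (hres : π.RestrictsTo χ) {z : H} (hz : z ∈ Subgroup.center H)
    (hχ : χ ⟨z, hz⟩ = -1) (hcomm : ∀ g h : H, ⁅g, h⁆ ∈ ({1, z} : Set H)) :
    Module.finrank ℂ π.carrier ^ 2 = Fintype.card (H ⧸ Subgroup.center H) := by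
  have hΦ : π.toIndSpace hres 1 ≠ 0 := fun h0 =>
    hirr.natCast_finrank_ne_zero (by simpa using congr_fun (congrArg Subtype.val h0) 1)
  have key : ((Module.finrank ℂ π.carrier : ℂ) ^ 2) • π.toIndSpace hres 1 =
      (Fintype.card (H ⧸ Subgroup.center H) : ℂ) • π.toIndSpace hres 1 :=
    calc ((Module.finrank ℂ π.carrier : ℂ) ^ 2) • π.toIndSpace hres 1
        = π.toIndSpace hres
            ((Module.finrank ℂ π.carrier : ℂ) • π.ofIndSpace χ (π.toIndSpace hres 1)) := by
          rw [pow_two, mul_smul, map_smul, π.toIndSpace_ofIndSpace hres hz hχ hcomm]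
      _ = (Fintype.card (H ⧸ Subgroup.center H) : ℂ) • π.toIndSpace hres 1 := by
          rw [hirr.finrank_smul_ofIndSpace_toIndSpace, map_smul]
  exact_mod_cast smul_left_injective ℂ hΦ key

theorem IsIrreducible.bijective_toIndSpace [Fintype (H ⧸ Subgroup.center H)]
    (hirr : π.IsIrreducible) (hres : π.RestrictsTo χ) {z : H} (hz : z ∈ Subgroup.center H)
    (hχ : χ ⟨z, hz⟩ = -1) (hcomm : ∀ g h : H, ⁅g, h⁆ ∈ ({1, z} : Set H)) :
    Function.Bijective (π.toIndSpace hres) := by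
  refine ⟨fun S T hST => ?_, fun f => ⟨(Module.finrank ℂ π.carrier : ℂ)⁻¹ • π.ofIndSpace χ f, ?_⟩⟩
  · have hN : (Fintype.card (H ⧸ Subgroup.center H) : ℂ) ≠ 0 := by simp
    apply smul_right_injective _ hN
    simp only [← hirr.finrank_smul_ofIndSpace_toIndSpace hres, hST]
  · rw [map_smul, π.toIndSpace_ofIndSpace hres hz hχ hcomm,
      inv_smul_smul₀ hirr.natCast_finrank_ne_zero]

variable (π) in
noncomputable def mulLeftRep : Representation ℂ H (Module.End ℂ π.carrier) :=
  (Algebra.lmul ℂ (Module.End ℂ π.carrier)).toMonoidHom.comp π.ρ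

theorem repIso_mulLeftRep_copiesRep {n : ℕ} (hn : Module.finrank ℂ π.carrier = n) :
    RepIso π.mulLeftRep (copiesRep H n π.ρ) :=
  ⟨((Module.finBasisOfFinrankEq ℂ π.carrier hn).constr ℂ).symm, fun _ _ => rfl⟩

end FinDimRep

theorem dim_and_induced_decomposition_general
    (H : Type) [Group H] (z : H) (hz : z ∈ Subgroup.center H)
    (hcomm : ∀ g h : H, ⁅g, h⁆ ∈ ({1, z} : Set H))
    (hfin : (Subgroup.center H).FiniteIndex)
    (n : ℕ) (hidx : (Subgroup.center H).index = n ^ 2)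
    (χ : Subgroup.center H →* ℂˣ) (hχ : χ ⟨z, hz⟩ = -1)
    (π : FinDimRep H) (hirr : π.IsIrreducible) (hres : π.RestrictsTo χ) :
    Module.finrank ℂ π.carrier = n ∧
      RepIso (indRep H χ) (copiesRep H n π.ρ) := by
  let := (Subgroup.center H).fintypeQuotientOfFiniteIndex
  have hdim : Module.finrank ℂ π.carrier = n := by
    have hsq := hirr.finrank_sq_eq_card hres hz hχ hcomm
    rw [← Nat.card_eq_fintype_card, ← Subgroup.index_eq_card, hidx] at hsq
    exact Nat.pow_left_injective two_ne_zero hsq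
  have hind : RepIso π.mulLeftRep (indRep H χ) :=
    ⟨.ofBijective _ (hirr.bijective_toIndSpace hres hz hχ hcomm), π.toIndSpace_mul hres⟩
  exact ⟨hdim, hind.symm.trans (π.repIso_mulLeftRep_copiesRep hdim)⟩

/-- The dimension and induction part of **Lemma 5.1** of the paper: if
`[H : Z(H)] = n²` and `χ` is a genuine character of `Z(H)` with associated
irreducible representation `π = π(χ)`, then `dim π(χ) = n` and
`Ind_{Z(H)}^{H} χ ≅ n · π(χ)`. -/
theorem dim_and_induced_decomposition
    (H : Type) [Group H] (z : H) (hz : z ∈ Subgroup.center H)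
    (hz2 : orderOf z = 2)
    (hcomm : ∀ g h : H, ⁅g, h⁆ ∈ ({1, z} : Set H))
    (hfin : (Subgroup.center H).FiniteIndex)
    (n : ℕ) (hn : 0 < n) (hidx : (Subgroup.center H).index = n ^ 2)
    (χ : Subgroup.center H →* ℂˣ) (hχ : χ ⟨z, hz⟩ = -1)
    (π : FinDimRep H) (hirr : π.IsIrreducible) (hres : π.RestrictsTo χ) :
    Module.finrank ℂ π.carrier = n ∧
      RepIso (indRep H χ) (copiesRep H n π.ρ) :=
  dim_and_induced_decomposition_general H z hz hcomm hfin n hidx χ hχ π hirr hres
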